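/- arXiv:1101.2462 — 7 statements merged into one kernel-verified Lean document; each statement's English description precedes it below -/
import Mathlib

section
/- Let M be an ordered monoid and ⋆ a closure operation on M. Then ⋆ is a nucleus if and only if the ⋆-multiplication (x,y) ↦ (xy)⋆ on M is associative. -/
def IsClosureOp {S : Type*} [PartialOrder S] (f : S → S) : Prop :=
  (∀ x, x ≤ f x) ∧ Monotone f ∧ (∀ x, f (f x) = f x)

/-- Let `M` be an ordered monoid and `⋆` a closure operation on `M`.  Then `⋆` is a
nucleus if and only if `⋆`-multiplication `(x, y) ↦ (xy)⋆` is associative. -/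
theorem nucleus_iff_star_mul_assoc {M : Type*} [Monoid M] [PartialOrder M]
    (hmul : ∀ a b c d : M, a ≤ c → b ≤ d → a * b ≤ c * d)
    (f : M → M) (hf : IsClosureOp f) :
    (∀ x y : M, f x * f y ≤ f (x * y)) ↔
      ∀ x y z : M, f (f (x * y) * z) = f (x * f (y * z)) := by
  obtain ⟨hle, hmono, hidem⟩ := hf
  constructor
  · intro hnuc x y z
    have key : ∀ a b : M, f (f a * b) = f (a * b) := by
      intro a b
      apply le_antisymm
      · have h1 : f a * b ≤ f a * f b := hmul _ _ _ _ le_rfl (hle b)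
        have h2 : f a * f b ≤ f (a * b) := hnuc a b
        calc f (f a * b) ≤ f (f (a * b)) := hmono (h1.trans h2)
          _ = f (a * b) := hidem _
      · exact hmono (hmul _ _ _ _ (hle a) le_rfl)
    have key' : ∀ a b : M, f (a * f b) = f (a * b) := by
      intro a b
      apply le_antisymm
      · have h1 : a * f b ≤ f a * f b := hmul _ _ _ _ (hle a) le_rfl
        have h2 : f a * f b ≤ f (a * b) := hnuc a b
        calc f (a * f b) ≤ f (f (a * b)) := hmono (h1.trans h2)
          _ = f (a * b) := hidem _
      · exact hmono (hmul _ _ _ _ le_rfl (hle b))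
    rw [key, key', mul_assoc]
  · intro hassoc x y
    have h1 : ∀ a b : M, f (f a * b) = f (a * b) := by
      intro a b
      have := hassoc 1 a b
      simpa [hidem] using this
    have h2 : ∀ a b : M, f (a * f b) = f (a * b) := by
      intro a b
      have := hassoc a b 1
      simpa [hidem] using this.symm
    calc f x * f y ≤ f (f x * f y) := hle _
      _ = f (x * f y) := h1 _ _
      _ = f (x * y) := h2 _ _
end

section
/- Let M be an ordered magma with a left or right identity, and ⋆ a self-map of M. Then ⋆ is a nucleus on M if and only if for all x, y, z ∈ M: xy ≤ z⋆ ⟺ x y⋆ ≤ z⋆ ⟺ x⋆ y ≤ z⋆. -/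
/-- Let `M` be an ordered magma with a left or right identity, and `⋆` a self-map of `M`.
Then `⋆` is a nucleus on `M` if and only if for all `x, y, z`:
`xy ≤ z⋆ ⟺ x y⋆ ≤ z⋆ ⟺ x⋆ y ≤ z⋆`. -/
theorem nucleus_iff_single_axiom {M : Type*} [Mul M] [PartialOrder M]
    (hmul : ∀ a b c d : M, a ≤ c → b ≤ d → a * b ≤ c * d)
    (e : M) (he : (∀ x : M, e * x = x) ∨ (∀ x : M, x * e = x))
    (f : M → M) :
    (IsClosureOp f ∧ ∀ x y : M, f x * f y ≤ f (x * y)) ↔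
      ∀ x y z : M, (x * y ≤ f z ↔ x * f y ≤ f z) ∧ (x * y ≤ f z ↔ f x * y ≤ f z) := by
  constructor
  · rintro ⟨⟨hexp, hmono, hidem⟩, hnuc⟩ x y z
    constructor
    · constructor
      · intro h
        calc x * f y ≤ f x * f y := hmul _ _ _ _ (hexp x) le_rfl
          _ ≤ f (x * y) := hnuc x y
          _ ≤ f (f z) := hmono h
          _ = f z := hidem z
      · intro h
        exact le_trans (hmul _ _ _ _ le_rfl (hexp y)) h
    · constructor
      · intro h
        calc f x * y ≤ f x * f y := hmul _ _ _ _ le_rfl (hexp y)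
          _ ≤ f (x * y) := hnuc x y
          _ ≤ f (f z) := hmono h
          _ = f z := hidem z
      · intro h
        exact le_trans (hmul _ _ _ _ (hexp x) le_rfl) h
  · intro H
    have hexp : ∀ x, x ≤ f x := by
      intro x
      rcases he with he | he
      · have := (H e x x).1.2
        rw [he, he] at this
        exact this le_rfl
      · have := (H x e x).2.2
        rw [he, he] at this
        exact this le_rfl
    have hmono : Monotone f := by
      intro x y hxy
      rcases he with he | he
      · have := (H e x y).1.1
        rw [he, he] at this
        exact this (le_trans hxy (hexp y))
      · have := (H x e y).2.1
        rw [he, he] at this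
        exact this (le_trans hxy (hexp y))
    have hidem : ∀ x, f (f x) = f x := by
      intro x
      refine le_antisymm ?_ (hexp _)
      rcases he with he | he
      · have := (H e (f x) x).1.1
        rw [he, he] at this
        exact this le_rfl
      · have := (H (f x) e x).2.1
        rw [he, he] at this
        exact this le_rfl
    refine ⟨⟨hexp, hmono, hidem⟩, fun x y => ?_⟩
    have h1 : x * f y ≤ f (x * y) := (H x y (x * y)).1.1 (hexp _)
    exact (H x (f y) (x * y)).2.1 h1
end

section
/- The only nucleus on a partially ordered group (indeed, on any ordered unital magma in which every element is invertible) is the identity map. -/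
/-- The only nucleus on an ordered unital magma in which every element is invertible
(in particular, on a partially ordered group) is the identity map. -/
theorem nucleus_eq_id_of_all_invertible {M : Type*} [Mul M] [One M] [PartialOrder M]
    (hmul : ∀ a b c d : M, a ≤ c → b ≤ d → a * b ≤ c * d)
    (hone : ∀ x : M, 1 * x = x ∧ x * 1 = x)
    (hinv : ∀ u : M, ∃ v : M, ∀ x : M,
      v * (u * x) = x ∧ u * (v * x) = x ∧ (x * u) * v = x ∧ (x * v) * u = x)
    (f : M → M) (hf : IsClosureOp f)
    (hnuc : ∀ x y : M, f x * f y ≤ f (x * y)) :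
    f = id := by
  obtain ⟨hle, hmono, hidem⟩ := hf
  -- Step 1: f 1 = 1
  have h11 : (1 : M) * 1 = 1 := (hone 1).1
  have hee : f 1 * f 1 ≤ f 1 := by
    have := hnuc (1 : M) 1
    rwa [h11] at this
  have heq : f 1 * f 1 = f 1 := by
    apply le_antisymm hee
    calc f 1 = f 1 * 1 := (hone (f 1)).2.symm
    _ ≤ f 1 * f 1 := hmul _ _ _ _ le_rfl (hle 1)
  obtain ⟨w, hw⟩ := hinv (f 1)
  have hwe : w * f 1 = 1 := by
    have := (hw 1).1
    rwa [(hone (f 1)).2] at this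
  have hf1 : f 1 = 1 := by
    have h := (hw (f 1)).1
    rw [heq, hwe] at h
    exact h.symm
  -- Step 2: f x ≤ x for all x
  funext x
  obtain ⟨v, hv⟩ := hinv x
  have hxv : x * v = 1 := by
    have := (hv 1).2.2.1
    rwa [(hone x).1] at this
  have h1 : f x * v ≤ 1 := by
    calc f x * v ≤ f x * f v := hmul _ _ _ _ le_rfl (hle v)
    _ ≤ f (x * v) := hnuc x v
    _ = 1 := by rw [hxv, hf1]
  have h2 : (f x * v) * x ≤ x := by
    calc (f x * v) * x ≤ 1 * x := hmul _ _ _ _ h1 le_rfl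
    _ = x := (hone x).1
  have h3 : (f x * v) * x = f x := (hv (f x)).2.2.2
  rw [h3] at h2
  exact le_antisymm h2 (hle x)
end

section
/- Let S be an algebraic bounded complete join semilattice and ⋆ a closure operation on S. Define x^{⋆_f} = ⋁{y⋆ : y compact, y ≤ x}. Then ⋆_f is the coarsest finitary closure operation on S that is finer than ⋆, and x^{⋆_f} = x⋆ for every compact x. -/
def IsCompactElt {α : Type*} [Preorder α] (x : α) : Prop :=
  ∀ Δ : Set α, Δ.Nonempty → DirectedOn (· ≤ ·) Δ →
    ∀ s : α, IsLUB Δ s → x ≤ s → ∃ y ∈ Δ, x ≤ y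

lemma compact_sup' {S : Type*} [SemilatticeSup S] {a b : S}
    (ha : IsCompactElt a) (hb : IsCompactElt b) : IsCompactElt (a ⊔ b) := by
  intro Δ hne hdir s hs hle
  obtain ⟨y1, hy1, ha1⟩ := ha Δ hne hdir s hs (le_sup_left.trans hle)
  obtain ⟨y2, hy2, hb2⟩ := hb Δ hne hdir s hs (le_sup_right.trans hle)
  obtain ⟨z, hz, h1, h2⟩ := hdir y1 hy1 y2 hy2
  exact ⟨z, hz, sup_le (ha1.trans h1) (hb2.trans h2)⟩


/-- Let `S` be an algebraic bounded complete join semilattice and `⋆` a closure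
operation.  Then `x ↦ ⋁ {y⋆ | y compact, y ≤ x}` is the coarsest finitary closure
operation finer than `⋆`, and it agrees with `⋆` on compact elements. -/
theorem coarsest_finitary_below {S : Type*} [SemilatticeSup S]
    (halg : ∀ x : S, IsLUB {y : S | IsCompactElt y ∧ y ≤ x} x)
    (hbc : ∀ X : Set S, X.Nonempty → BddAbove X → ∃ s : S, IsLUB X s)
    (f : S → S) (hf : IsClosureOp f) :
    ∃ g : S → S,
      (∀ x : S, IsLUB (f '' {y : S | IsCompactElt y ∧ y ≤ x}) (g x)) ∧
      IsClosureOp g ∧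
      (∀ (Δ : Set S) (s : S), Δ.Nonempty → DirectedOn (· ≤ ·) Δ → IsLUB Δ s →
        IsLUB (g '' Δ) (g s)) ∧
      (∀ x : S, g x ≤ f x) ∧
      (∀ h : S → S, IsClosureOp h →
        (∀ (Δ : Set S) (s : S), Δ.Nonempty → DirectedOn (· ≤ ·) Δ → IsLUB Δ s →
          IsLUB (h '' Δ) (h s)) →
        (∀ x : S, h x ≤ f x) → ∀ x : S, h x ≤ g x) ∧
      (∀ x : S, IsCompactElt x → g x = f x) := by
  obtain ⟨hf1, hf2, hf3⟩ := hf
  set K : S → Set S := fun x => {y : S | IsCompactElt y ∧ y ≤ x} with hKdef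
  have hKne : ∀ x, (K x).Nonempty := by
    intro x
    by_contra h
    rw [Set.not_nonempty_iff_eq_empty] at h
    have hlub := halg x
    rw [show {y : S | IsCompactElt y ∧ y ≤ x} = K x from rfl, h] at hlub
    have hleast : ∀ z : S, x ≤ z := fun z =>
      hlub.2 (fun a ha => absurd ha (Set.notMem_empty a))
    have hc : IsCompactElt x := by
      rintro Δ ⟨y, hy⟩ _ s _ _
      exact ⟨y, hy, hleast y⟩
    have hx : x ∈ K x := ⟨hc, le_refl x⟩
    rw [h] at hx
    exact hx
  have hKdir : ∀ x, DirectedOn (· ≤ ·) (K x) := fun x a ha b hb =>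
    ⟨a ⊔ b, ⟨compact_sup' ha.1 hb.1, sup_le ha.2 hb.2⟩, le_sup_left, le_sup_right⟩
  have hEx : ∀ x, ∃ s, IsLUB (f '' K x) s := by
    intro x
    refine hbc _ ((hKne x).image f) ⟨f x, ?_⟩
    rintro _ ⟨y, hy, rfl⟩
    exact hf2 hy.2
  choose g hg using hEx
  have hgub : ∀ x, ∀ y ∈ K x, f y ≤ g x := fun x y hy => (hg x).1 ⟨y, hy, rfl⟩
  have hxg : ∀ x, x ≤ g x := by
    intro x
    apply (halg x).2
    intro y hy
    exact (hf1 y).trans (hgub x y hy)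
  have hgmono : Monotone g := by
    intro a b hab
    apply (hg a).2
    rintro _ ⟨y, hy, rfl⟩
    exact hgub b y ⟨hy.1, hy.2.trans hab⟩
  have hgf : ∀ x, g x ≤ f x := by
    intro x
    apply (hg x).2
    rintro _ ⟨y, hy, rfl⟩
    exact hf2 hy.2
  have himgdir : ∀ x, DirectedOn (· ≤ ·) (f '' K x) := by
    rintro x _ ⟨ya, hya, rfl⟩ _ ⟨yb, hyb, rfl⟩
    obtain ⟨z, hz, h1, h2⟩ := hKdir x ya hya yb hyb
    exact ⟨f z, ⟨z, hz, rfl⟩, hf2 h1, hf2 h2⟩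
  have hgidem : ∀ x, g (g x) = g x := by
    intro x
    refine le_antisymm ?_ (hxg (g x))
    apply (hg (g x)).2
    rintro _ ⟨y, ⟨hyc, hyle⟩, rfl⟩
    obtain ⟨_, ⟨z, hz, rfl⟩, hyz⟩ :=
      hyc (f '' K x) ((hKne x).image f) (himgdir x) (g x) (hg x) hyle
    calc f y ≤ f (f z) := hf2 hyz
      _ = f z := hf3 z
      _ ≤ g x := hgub x z hz
  refine ⟨g, hg, ⟨hxg, hgmono, hgidem⟩, ?_, hgf, ?_, ?_⟩
  · intro Δ s hne hdir hs
    constructor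
    · rintro _ ⟨d, hd, rfl⟩
      exact hgmono (hs.1 hd)
    · intro u hu
      apply (hg s).2
      rintro _ ⟨y, ⟨hyc, hys⟩, rfl⟩
      obtain ⟨d, hd, hyd⟩ := hyc Δ hne hdir s hs hys
      exact (hgub d y ⟨hyc, hyd⟩).trans (hu ⟨d, hd, rfl⟩)
  · intro h _ hhfin hhf x
    have hx := hhfin (K x) x (hKne x) (hKdir x) (halg x)
    apply hx.2
    rintro _ ⟨y, hy, rfl⟩
    exact (hhf y).trans (hgub x y hy)
  · intro x hxc
    exact le_antisymm (hgf x) ((hg x).1 ⟨x, ⟨hxc, le_rfl⟩, rfl⟩)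
end

section
/- Let Q be a unital near quantale and a ∈ Q. Then the map x ↦ ⋁{y ∈ Q : for all r,s ∈ Q, (rxs ≤ a ⟹ rys ≤ a)} is the coarsest nucleus v(a) on Q satisfying a^{v(a)} = a. -/
def IsNucleus {M : Type*} [Mul M] [PartialOrder M] (f : M → M) : Prop :=
  (∀ x, x ≤ f x) ∧ Monotone f ∧ (∀ x, f (f x) = f x) ∧ ∀ x y : M, f x * f y ≤ f (x * y)

/-- Let `Q` be a unital near quantale (ordered monoid in which every nonempty subset has
a supremum and multiplication distributes over nonempty suprema) and `a ∈ Q`.  Then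
`x ↦ ⋁ {y | ∀ r s, r x s ≤ a → r y s ≤ a}` is the coarsest nucleus `v(a)` on `Q`
with `a^{v(a)} = a`. -/
theorem divisorial_closure_coarsest {Q : Type*} [Monoid Q] [PartialOrder Q]
    (hmul : ∀ a b c d : Q, a ≤ c → b ≤ d → a * b ≤ c * d)
    (hsup : ∀ X : Set Q, X.Nonempty → ∃ s : Q, IsLUB X s)
    (hdist : ∀ (a : Q) (X : Set Q) (s : Q), X.Nonempty → IsLUB X s →
      IsLUB ((a * ·) '' X) (a * s) ∧ IsLUB ((· * a) '' X) (s * a))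
    (a : Q) (v : Q → Q)
    (hv : ∀ x : Q, IsLUB {y : Q | ∀ r s : Q, r * x * s ≤ a → r * y * s ≤ a} (v x)) :
    IsNucleus v ∧ v a = a ∧ ∀ f : Q → Q, IsNucleus f → f a = a → ∀ x : Q, f x ≤ v x := by
  set S : Q → Set Q := fun x => {y : Q | ∀ r s : Q, r * x * s ≤ a → r * y * s ≤ a} with hS
  have hne : ∀ x, (S x).Nonempty := fun x => ⟨x, fun r s h => h⟩
  have hle : ∀ x, x ≤ v x := fun x => (hv x).1 (fun r s h => h)
  have hmem : ∀ x, v x ∈ S x := by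
    intro x r s hrs
    have h1 := (hdist r (S x) (v x) (hne x) (hv x)).1
    have h2 := (hdist s ((r * ·) '' (S x)) (r * v x) ((hne x).image _) h1).2
    refine h2.2 ?_
    rintro z ⟨w, ⟨y, hy, rfl⟩, rfl⟩
    exact hy r s hrs
  have hmono : Monotone v := by
    intro x y hxy
    refine (hv y).1 ?_
    intro r s hrs
    exact hmem x r s (le_trans (hmul _ _ _ _ (hmul _ _ _ _ le_rfl hxy) le_rfl) hrs)
  have hidem : ∀ x, v (v x) = v x := by
    intro x
    refine le_antisymm ((hv (v x)).2 ?_) (hle (v x))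
    intro y hy
    refine (hv x).1 ?_
    intro r s hrs
    exact hy r s (hmem x r s hrs)
  have hmul' : ∀ x y : Q, v x * v y ≤ v (x * y) := by
    intro x y
    refine (hv (x * y)).1 ?_
    intro r s hrs
    have h1 : r * x * y * s ≤ a := by
      simpa [mul_assoc] using hrs
    have h2 : (r * x) * (v y) * s ≤ a := hmem y (r * x) s h1
    have h3 : r * x * (v y * s) ≤ a := by
      simpa [mul_assoc] using h2
    have h4 : r * (v x) * (v y * s) ≤ a := hmem x r (v y * s) h3
    simpa [mul_assoc] using h4
  have hva : v a = a := by
    refine le_antisymm ((hv a).2 ?_) (hle a)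
    intro y hy
    simpa using hy 1 1 (by simp)
  refine ⟨⟨hle, hmono, hidem, hmul'⟩, hva, ?_⟩
  intro f ⟨hfle, hfmono, _, hfmul⟩ hfa x
  refine (hv x).1 ?_
  intro r s hrs
  calc r * f x * s ≤ f r * f x * f s :=
        hmul _ _ _ _ (hmul _ _ _ _ (hfle r) le_rfl) (hfle s)
    _ ≤ f (r * x) * f s := hmul _ _ _ _ (hfmul r x) le_rfl
    _ ≤ f (r * x * s) := hfmul _ _
    _ ≤ f a := hfmono hrs
    _ = a := hfa
end

section
/- A multiplicative lattice Q is simple if and only if Q = {0, 1}, i.e. Q has at most two elements: the bottom annihilator 0 and the identity 1. -/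
/-- A multiplicative lattice `Q` (commutative unital quantale) is simple (its only
nuclei are the identity and the constant map to the top) if and only if `Q = {0, 1}`,
i.e. every element is the bottom annihilator `0` or the identity `1`. -/
theorem multiplicative_lattice_simple_iff {Q : Type*} [CompleteLattice Q] [CommMonoid Q]
    (hdist : ∀ (a : Q) (X : Set Q), a * sSup X = ⨆ x ∈ X, a * x) :
    (∀ f : Q → Q, IsNucleus f → f = id ∨ f = fun _ => (⊤ : Q)) ↔
      ∀ x : Q, x = ⊥ ∨ x = 1 := by
  have hsup : ∀ a x y : Q, a * (x ⊔ y) = a * x ⊔ a * y := by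
    intro a x y
    have h := hdist a {x, y}
    rw [sSup_pair, iSup_pair] at h
    exact h
  have hmono : ∀ a : Q, ∀ {x y : Q}, x ≤ y → a * x ≤ a * y := by
    intro a x y hxy
    have := hsup a x y
    rw [sup_eq_right.mpr hxy] at this
    rw [this]; exact le_sup_left
  have hmono' : ∀ a : Q, ∀ {x y : Q}, x ≤ y → x * a ≤ y * a := by
    intro a x y hxy
    rw [mul_comm x a, mul_comm y a]; exact hmono a hxy
  constructor
  · intro hsimple a
    -- the residual by ⊤
    set r : Q → Q := fun b => sSup {c | ⊤ * c ≤ b} with hr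
    have hr_le : ∀ b, ⊤ * r b ≤ b := by
      intro b
      rw [hr]
      simp only
      rw [hdist ⊤ {c | ⊤ * c ≤ b}]
      exact iSup₂_le fun c hc => hc
    have hr_mono : ∀ b b' : Q, b ≤ b' → r b ≤ r b' := fun b b' h =>
      sSup_le_sSup fun c hc => le_trans hc h
    have hle_r : ∀ c b : Q, ⊤ * c ≤ b → c ≤ r b := fun c b h => le_sSup h
    set j : Q → Q := fun x => r (⊤ * x) with hj
    have hjnuc : IsNucleus j := by
      refine ⟨fun x => hle_r _ _ le_rfl, fun x y hxy => hr_mono _ _ (hmono ⊤ hxy), ?_, ?_⟩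
      · intro x
        exact le_antisymm (hr_mono _ _ (hr_le (⊤ * x))) (hle_r _ _ le_rfl)
      · intro x y
        apply hle_r
        calc ⊤ * (j x * j y) = j y * (⊤ * j x) := by
              rw [mul_comm (j x) (j y), mul_left_comm]
          _ ≤ j y * (⊤ * x) := hmono _ (hr_le _)
          _ = x * (⊤ * j y) := by
              rw [mul_left_comm, mul_comm (j y) x, mul_left_comm]
          _ ≤ x * (⊤ * y) := hmono _ (hr_le _)
          _ = ⊤ * (x * y) := by rw [mul_left_comm]
    rcases hsimple j hjnuc with hid | htop
    · -- then ⊤ = 1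
      have h1 : j 1 = 1 := by rw [hid]; rfl
      have htop1 : (⊤ : Q) = 1 := by
        refine le_antisymm ?_ le_top
        rw [← h1]
        exact hle_r _ _ (by rw [mul_one]; exact le_top)
      -- every element is ≤ 1
      have hle1 : ∀ x : Q, x ≤ 1 := fun x => htop1 ▸ le_top
      have hmul_le_left : ∀ x y : Q, x * y ≤ x := fun x y => by
        calc x * y ≤ x * 1 := hmono x (hle1 y)
          _ = x := mul_one x
      have hmul_le_right : ∀ x y : Q, x * y ≤ y := fun x y => by
        rw [mul_comm]; exact hmul_le_left y x
      set v : Q → Q := fun x => a ⊔ x with hv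
      have hvnuc : IsNucleus v := by
        refine ⟨fun x => le_sup_right, fun x y hxy => sup_le_sup_left hxy a, ?_, ?_⟩
        · intro x; rw [hv]; simp [← sup_assoc]
        · intro x y
          show (a ⊔ x) * (a ⊔ y) ≤ a ⊔ x * y
          rw [hsup (a ⊔ x) a y, mul_comm _ y, hsup y a x]
          refine sup_le (le_sup_of_le_left (hmul_le_right _ _))
            (sup_le (le_sup_of_le_left (hmul_le_right _ _)) ?_)
          rw [mul_comm y x]; exact le_sup_right
      rcases hsimple v hvnuc with hvid | hvtop
      · left
        have : v ⊥ = ⊥ := by rw [hvid]; rfl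
        simpa [hv] using this
      · right
        have : v ⊥ = ⊤ := by rw [hvtop]
        rw [htop1] at this
        simpa [hv] using this
    · -- Q is trivial
      left
      have h0 : j ⊥ = ⊤ := by rw [htop]
      have : (⊤ : Q) * ⊤ ≤ ⊥ := by
        have := hr_le ((⊤ : Q) * ⊥)
        have hb : (⊤ : Q) * ⊥ = ⊥ := by simpa using hdist ⊤ ∅
        rw [show r (⊤ * ⊥) = j ⊥ from rfl, h0, hb] at this
        exact this
      have htb : (⊤ : Q) ≤ ⊥ := by
        calc (⊤ : Q) = ⊤ * 1 := (mul_one _).symm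
          _ ≤ ⊤ * ⊤ := hmono ⊤ le_top
          _ ≤ ⊥ := this
      exact le_bot_iff.mp (le_top.trans htb)
  · intro h f hf
    obtain ⟨hinfl, hmon, hidem, hmul⟩ := hf
    rcases h ⊤ with htb | htop1
    · -- trivial lattice
      left
      funext x
      have hx : x = ⊥ := le_bot_iff.mp (le_top.trans_eq htb)
      have hfx : f x = ⊥ := le_bot_iff.mp (le_top.trans_eq htb)
      rw [hfx, hx]; rfl
    · have hf1 : f 1 = 1 := by
        rcases h (f 1) with h' | h'
        · have : (1 : Q) ≤ ⊥ := h' ▸ hinfl 1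
          rw [h', le_bot_iff.mp this]
        · exact h'
      rcases h (f ⊥) with hb | hb
      · left
        funext x
        rcases h x with rfl | rfl
        · exact hb
        · exact hf1
      · right
        funext x
        rcases h x with rfl | rfl
        · show f ⊥ = ⊤; rw [hb, htop1]
        · show f 1 = ⊤; rw [hf1, htop1]
end

section
/- Let M be an ordered commutative monoid. For each idempotent a ≥ 1, the map d_a : x ↦ xa is a nucleus on M with (xy)^{d_a} = x^{d_a} y^{d_a}, and the pair of maps a ↦ d_a from {idempotents ≥ 1} to the poset of nuclei and ⋆ ↦ 1⋆ in the other direction form a faithful order-preserving Galois connection; in particular a ↦ d_a is an order embedding. -/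
/-- In an ordered commutative monoid `M`: for every idempotent `a ≥ 1` the map
`d_a : x ↦ x * a` is a (strict) nucleus; `a ↦ d_a` and `⋆ ↦ 1⋆` form a faithful
order-preserving Galois connection between `{idempotents ≥ 1}` and the nuclei; in
particular `a ↦ d_a` is an order embedding. -/
theorem da_galois_connection {M : Type*} [CommMonoid M] [PartialOrder M]
    (hmul : ∀ a b c d : M, a ≤ c → b ≤ d → a * b ≤ c * d) :
    (∀ a : M, a * a = a → 1 ≤ a →
      IsNucleus (fun x => x * a) ∧ ∀ x y : M, (x * y) * a = (x * a) * (y * a)) ∧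
    (∀ a : M, a * a = a → 1 ≤ a → ∀ f : M → M, IsNucleus f →
      ((∀ x : M, x * a ≤ f x) ↔ a ≤ f 1)) ∧
    (∀ a : M, a * a = a → 1 ≤ a → 1 * a = a) ∧
    (∀ a b : M, a * a = a → 1 ≤ a → b * b = b → 1 ≤ b →
      ((∀ x : M, x * a ≤ x * b) ↔ a ≤ b)) := by
  refine ⟨?_, ?_, ?_, ?_⟩
  · intro a ha h1
    refine ⟨⟨?_, ?_, ?_, ?_⟩, ?_⟩
    · intro x
      calc x = x * 1 := (mul_one x).symm
        _ ≤ x * a := hmul _ _ _ _ le_rfl h1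
    · intro x y hxy
      exact hmul _ _ _ _ hxy le_rfl
    · intro x
      simp only [mul_assoc, ha]
    · intro x y
      simp only
      calc (x * a) * (y * a) = (x * y) * (a * a) := (mul_mul_mul_comm x y a a).symm
        _ = (x * y) * a := by rw [ha]
        _ ≤ (x * y) * a := le_rfl
    · intro x y
      calc (x * y) * a = (x * y) * (a * a) := by rw [ha]
        _ = (x * a) * (y * a) := mul_mul_mul_comm x y a a
  · intro a ha h1 f ⟨hexp, hmono, hidem, hsub⟩
    constructor
    · intro h
      have := h 1
      rwa [one_mul] at this
    · intro h x
      calc x * a ≤ f x * f 1 := hmul _ _ _ _ (hexp x) h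
        _ ≤ f (x * 1) := hsub x 1
        _ = f x := by rw [mul_one]
  · intro a _ _; exact one_mul a
  · intro a b ha h1a hb h1b
    constructor
    · intro h
      have := h 1
      rwa [one_mul, one_mul] at this
    · intro h x
      exact hmul _ _ _ _ le_rfl h
end
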